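/- arXiv:2005.02566 — 2 statements merged into one kernel-verified Lean document; each statement's English description precedes it below -/
import Mathlib

section
/- Let τ ∈ (3,4) and θ = (θ_i)_{i≥1} be a nonincreasing sequence of positive reals with Σ θ_i³ < ∞. Define Ψ_θ(u) = Σ_{i≥1} θ_i (e^{−uθ_i} − 1 + uθ_i). If there exists M ≥ 1 such that θ_{i+1}^{τ−2} Σ_{j=1}^i θ_j ≥ 1/M for all i ≥ 1, then ∫_1^∞ du/Ψ_θ(u) < ∞. -/
/-!
Write `φ(x) = e^{-x} - 1 + x`, so that `Ψ_θ(u) = ∑ θ_i φ(u θ_i)`. Since `e^{-x/2} ≥ 1 - x/2`, squaring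
gives `φ(x) ≥ x²/4` for `x ≤ 2`, while `φ(x) ≥ x/2 ≥ 1` for `x ≥ 2`. For `u ≥ 1` let `k` be the first
index with `u θ_k < 2` (it exists because `θ_i → 0`). If `k = 0`, then `Ψ_θ(u) ≥ u² ∑ θ_i³ / 4`.
Otherwise `Ψ_θ(u) ≥ ∑_{j<k} θ_j ≥ 1 / (M θ_k^{τ-2}) ≥ u^{τ-2} / (4M)` by the hypothesis at `i = k - 1`
and `θ_k < 2/u`. Either way `Ψ_θ(u) ≳ u^{τ-2}`, which is integrable at infinity after inversion
because `τ - 2 > 1`.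
-/

open MeasureTheory Set Real Filter

noncomputable def laplaceExponent (θ : ℕ → ℝ) (u : ℝ) : ℝ :=
  ∑' i, θ i * (exp (-u * θ i) - 1 + u * θ i)

lemma exp_neg_sub_one_add_nonneg (x : ℝ) : 0 ≤ exp (-x) - 1 + x := by
  linarith [add_one_le_exp (-x)]

lemma exp_neg_sub_one_add_le_sq {x : ℝ} (hx : 0 ≤ x) : exp (-x) - 1 + x ≤ x ^ 2 := by
  rcases le_total x 1 with hx1 | hx1
  · have h := abs_exp_sub_one_sub_id_le (x := -x) (by rwa [abs_neg, abs_of_nonneg hx])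
    rw [abs_le, neg_sq] at h
    linarith [h.2]
  · nlinarith [exp_le_one_iff.2 (neg_nonpos.2 hx)]

lemma sq_div_four_le_exp_neg_sub_one_add {x : ℝ} (hx : x ≤ 2) :
    x ^ 2 / 4 ≤ exp (-x) - 1 + x := by
  have h := pow_le_pow_left₀ (by linarith) (add_one_le_exp (-x / 2)) 2
  rw [← exp_nat_mul, show ((2 : ℕ) : ℝ) * (-x / 2) = -x by ring] at h
  linarith [show (-x / 2 + 1) ^ 2 = 1 - x + x ^ 2 / 4 by ring]

lemma one_le_exp_neg_sub_one_add {x : ℝ} (hx : 2 ≤ x) : 1 ≤ exp (-x) - 1 + x := by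
  linarith [exp_pos (-x)]

lemma exists_lt_of_summable_pow {f : ℕ → ℝ} {n : ℕ} (hf : Summable fun i => f i ^ n) {ε : ℝ}
    (hε : 0 < ε) : ∃ i, f i < ε := by
  obtain ⟨i, hi⟩ := (hf.tendsto_atTop_zero.eventually (gt_mem_nhds (pow_pos hε n))).exists
  exact ⟨i, lt_of_pow_lt_pow_left₀ n hε.le hi⟩

lemma rpow_div_le_of_one_div_le_rpow_mul {α M u t s : ℝ} (hα0 : 0 ≤ α) (hα2 : α ≤ 2)
    (hM : 0 < M) (hu : 0 < u) (ht : 0 ≤ t) (hut : u * t ≤ 2) (h : 1 / M ≤ t ^ α * s) :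
    u ^ α / (4 * M) ≤ s := by
  have hs : 0 ≤ s := by
    by_contra! hs
    have : t ^ α * s ≤ 0 := mul_nonpos_of_nonneg_of_nonpos (rpow_nonneg ht α) hs.le
    linarith [one_div_pos.2 hM]
  have hut4 : u ^ α * t ^ α ≤ 4 := by
    calc u ^ α * t ^ α = (u * t) ^ α := (mul_rpow hu.le ht).symm
      _ ≤ 2 ^ α := rpow_le_rpow (by positivity) hut hα0
      _ ≤ 2 ^ (2 : ℝ) := rpow_le_rpow_of_exponent_le (by norm_num) hα2
      _ = 4 := by norm_num
  rw [div_le_iff₀ hM] at h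
  rw [div_le_iff₀ (by positivity)]
  nlinarith [mul_le_mul_of_nonneg_left h (rpow_nonneg hu.le α),
    mul_le_mul_of_nonneg_left hut4 (mul_nonneg hs hM.le)]

section LaplaceExponent

variable {θ : ℕ → ℝ}

lemma mul_exp_neg_mul_sub_one_add_nonneg {t : ℝ} (ht : 0 ≤ t) (u : ℝ) :
    0 ≤ t * (exp (-u * t) - 1 + u * t) := by
  rw [neg_mul]
  exact mul_nonneg ht (exp_neg_sub_one_add_nonneg _)

lemma summable_laplaceExponent (hθ : ∀ i, 0 ≤ θ i) (hsum : Summable fun i => θ i ^ 3) {u : ℝ}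
    (hu : 0 ≤ u) : Summable fun i => θ i * (exp (-u * θ i) - 1 + u * θ i) := by
  refine (hsum.mul_left (u ^ 2)).of_nonneg_of_le
    (fun i => mul_exp_neg_mul_sub_one_add_nonneg (hθ i) u) (fun i => ?_)
  calc θ i * (exp (-u * θ i) - 1 + u * θ i) ≤ θ i * (u * θ i) ^ 2 := by
        rw [neg_mul]
        exact mul_le_mul_of_nonneg_left (exp_neg_sub_one_add_le_sq (mul_nonneg hu (hθ i))) (hθ i)
    _ = u ^ 2 * θ i ^ 3 := by ring

lemma aemeasurable_laplaceExponent (hθ : ∀ i, 0 ≤ θ i) (hsum : Summable fun i => θ i ^ 3)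
    {μ : Measure ℝ} : AEMeasurable (laplaceExponent θ) (μ.restrict (Ici 0)) := by
  refine aemeasurable_of_tendsto_metrizable_ae'
    (f := fun n u => ∑ i ∈ Finset.range n, θ i * (exp (-u * θ i) - 1 + u * θ i))
    (fun n => by fun_prop) ?_
  filter_upwards [ae_restrict_mem measurableSet_Ici] with u hu
  exact (summable_laplaceExponent hθ hsum hu).hasSum.tendsto_sum_nat

lemma sq_div_four_mul_tsum_le_laplaceExponent (hθ : ∀ i, 0 ≤ θ i) (hanti : Antitone θ)
    (hsum : Summable fun i => θ i ^ 3) {u : ℝ} (hu : 0 ≤ u) (hu2 : u * θ 0 ≤ 2) :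
    u ^ 2 / 4 * ∑' i, θ i ^ 3 ≤ laplaceExponent θ u := by
  rw [← tsum_mul_left]
  refine (hsum.mul_left _).tsum_le_tsum (fun i => ?_) (summable_laplaceExponent hθ hsum hu)
  have hi : u * θ i ≤ 2 := (mul_le_mul_of_nonneg_left (hanti (Nat.zero_le i)) hu).trans hu2
  calc u ^ 2 / 4 * θ i ^ 3 = θ i * ((u * θ i) ^ 2 / 4) := by ring
    _ ≤ θ i * (exp (-u * θ i) - 1 + u * θ i) := by
        rw [neg_mul]
        exact mul_le_mul_of_nonneg_left (sq_div_four_le_exp_neg_sub_one_add hi) (hθ i)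

lemma sum_range_le_laplaceExponent (hθ : ∀ i, 0 ≤ θ i) (hsum : Summable fun i => θ i ^ 3)
    {u : ℝ} (hu : 0 ≤ u) {k : ℕ} (hk : ∀ j < k, 2 ≤ u * θ j) :
    ∑ j ∈ Finset.range k, θ j ≤ laplaceExponent θ u := by
  refine (Finset.sum_le_sum fun j hj => ?_).trans <|
    (summable_laplaceExponent hθ hsum hu).sum_le_tsum _
      fun j _ => mul_exp_neg_mul_sub_one_add_nonneg (hθ j) u
  rw [neg_mul]
  exact le_mul_of_one_le_right (hθ j)
    (one_le_exp_neg_sub_one_add (hk j (Finset.mem_range.1 hj)))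

lemma rpow_mul_le_laplaceExponent {α M : ℝ} (hα0 : 0 ≤ α) (hα2 : α ≤ 2) (hM : 0 < M)
    (hpos : ∀ i, 0 < θ i) (hanti : Antitone θ) (hsum : Summable fun i => θ i ^ 3)
    (hlb : ∀ i : ℕ, 1 / M ≤ θ (i + 1) ^ α * ∑ j ∈ Finset.range (i + 1), θ j) {u : ℝ}
    (hu : 1 ≤ u) : min ((∑' i, θ i ^ 3) / 4) (1 / (4 * M)) * u ^ α ≤ laplaceExponent θ u := by
  have hθ : ∀ i, 0 ≤ θ i := fun i => (hpos i).le
  have hu0 : 0 < u := one_pos.trans_le hu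
  have hex : ∃ i, θ i < 2 / u := exists_lt_of_summable_pow hsum (by positivity)
  have hfind : u * θ (Nat.find hex) ≤ 2 := ((lt_div_iff₀' hu0).1 (Nat.find_spec hex)).le
  have hbefore : ∀ j < Nat.find hex, 2 ≤ u * θ j := fun j hj =>
    (div_le_iff₀' hu0).1 (not_lt.1 (Nat.find_min hex hj))
  rcases hk : Nat.find hex with _ | i
  · rw [hk] at hfind
    calc min ((∑' i, θ i ^ 3) / 4) (1 / (4 * M)) * u ^ α
        ≤ (∑' i, θ i ^ 3) / 4 * u ^ (2 : ℝ) :=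
          mul_le_mul (min_le_left _ _) (rpow_le_rpow_of_exponent_le hu hα2) (by positivity)
            (div_nonneg (tsum_nonneg fun i => pow_nonneg (hθ i) 3) zero_le_four)
      _ = u ^ 2 / 4 * ∑' i, θ i ^ 3 := by rw [rpow_two]; ring
      _ ≤ laplaceExponent θ u :=
          sq_div_four_mul_tsum_le_laplaceExponent hθ hanti hsum hu0.le hfind
  · rw [hk] at hfind hbefore
    calc min ((∑' i, θ i ^ 3) / 4) (1 / (4 * M)) * u ^ α
        ≤ u ^ α / (4 * M) := by
          rw [mul_comm, ← mul_one_div (u ^ α)]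
          exact mul_le_mul_of_nonneg_left (min_le_right _ _) (by positivity)
      _ ≤ ∑ j ∈ Finset.range (i + 1), θ j :=
          rpow_div_le_of_one_div_le_rpow_mul hα0 hα2 hM hu0 (hθ _) hfind (hlb i)
      _ ≤ laplaceExponent θ u := sum_range_le_laplaceExponent hθ hsum hu0.le hbefore

end LaplaceExponent

lemma integrableOn_Ici_one_div_of_mul_rpow_le {f : ℝ → ℝ} {c α : ℝ}
    (hf : AEMeasurable f (volume.restrict (Ici 1))) (hc : 0 < c) (hα : 1 < α)
    (hle : ∀ u, 1 ≤ u → c * u ^ α ≤ f u) : IntegrableOn (fun u => 1 / f u) (Ici 1) := by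
  have hg : IntegrableOn (fun u : ℝ => c⁻¹ * u ^ (-α)) (Ici 1) :=
    ((integrableOn_Ioi_rpow_of_lt (by linarith) one_half_pos).mono_set
      (Ici_subset_Ioi.2 one_half_lt_one)).const_mul _
  refine hg.mono' (hf.const_div 1).aestronglyMeasurable ?_
  filter_upwards [ae_restrict_mem measurableSet_Ici] with u hu
  have hu0 : 0 < u := one_pos.trans_le hu
  have hpos : 0 < c * u ^ α := mul_pos hc (rpow_pos_of_pos hu0 α)
  rw [norm_of_nonneg (one_div_pos.2 (hpos.trans_le (hle u hu))).le, rpow_neg hu0.le,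
    ← mul_inv, ← one_div]
  exact one_div_le_one_div_of_le hpos (hle u hu)

/-- If `τ ∈ (3,4)`, `θ` is a nonincreasing positive sequence with `∑ θ_i³ < ∞`, and
`θ_{i+1}^{τ−2} ∑_{j=1}^i θ_j ≥ 1/M` for all `i`, then `∫_1^∞ du / Ψ_θ(u) < ∞`, where
`Ψ_θ(u) = ∑_i θ_i (e^{−uθ_i} − 1 + uθ_i)`. -/
theorem stmt4 (τ : ℝ) (hτ : τ ∈ Set.Ioo (3 : ℝ) 4) (θ : ℕ → ℝ)
    (hpos : ∀ i, 0 < θ i) (hanti : Antitone θ)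
    (hsum : Summable (fun i => θ i ^ 3))
    (M : ℝ) (hM : 1 ≤ M)
    (hlb : ∀ i : ℕ, 1 / M ≤ θ (i + 1) ^ (τ - 2) * ∑ j ∈ Finset.range (i + 1), θ j) :
    IntegrableOn
      (fun u => 1 / (∑' i, θ i * (Real.exp (-u * θ i) - 1 + u * θ i))) (Set.Ici (1 : ℝ)) := by
  obtain ⟨hτ3, hτ4⟩ := hτ
  have hM0 : 0 < M := one_pos.trans_le hM
  have hS : 0 < ∑' i, θ i ^ 3 :=
    hsum.tsum_pos (fun i => (pow_pos (hpos i) 3).le) 0 (pow_pos (hpos 0) 3)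
  have hmeas : AEMeasurable (laplaceExponent θ) (volume.restrict (Ici 1)) :=
    (aemeasurable_laplaceExponent (fun i => (hpos i).le) hsum).mono_measure
      (Measure.restrict_mono (Ici_subset_Ici.2 zero_le_one) le_rfl)
  exact integrableOn_Ici_one_div_of_mul_rpow_le hmeas (lt_min (by positivity) (by positivity))
    (by linarith) fun u hu =>
      rpow_mul_le_laplaceExponent (by linarith) (by linarith) hM0 hpos hanti hsum hlb hu
end

section
/- Let (M(l))_{l≥0} be a martingale with M(0) = 0 adapted to a filtration (F_l), with increments bounded by R > 0 almost surely, and predictable quadratic variation ⟨M⟩(t) ≤ b almost surely for a fixed time t. Then for any a > 0, P(M(t) ≥ a) ≤ exp(−a²/(2(Ra + b))). -/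
open MeasureTheory Finset Filter Real

/-! For `0 ≤ λ` with `λ R < 1` and `c = λ² / (2 (1 - λ R))`, the elementary bound
`exp y ≤ 1 + y + y² / (2 (1 - r))` for `|y| ≤ r < 1`, applied to `y = λ (M (j+1) - M j)` and
conditioned on `F j` (where the increment has mean zero), gives
`E[exp (λ ΔM) | F j] ≤ exp (c E[ΔM² | F j])`. Since `⟨M⟩` is predictable, this makes
`exp (λ M n - c ⟨M⟩ n)` a supermartingale starting at `1`. On `{a ≤ M t}` it is at least
`exp (λ a - c b)`, so Markov's inequality gives `P(a ≤ M t) ≤ exp (-(λ a - c b))`, and the choice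
`λ = a / (R a + b)` turns the exponent into `-a² / (2 (R a + b))`. -/

lemma Real.exp_le_one_add_add_sq_div_of_abs_le {y r : ℝ} (hr : r < 1) (hy : |y| ≤ r) :
    exp y ≤ 1 + y + y ^ 2 / (2 * (1 - r)) := by
  have hr0 : 0 ≤ r := (abs_nonneg y).trans hy
  have htaylor := (abs_le.mp (Real.exp_bound (hy.trans hr.le) (n := 3) (by norm_num))).2
  norm_num [Finset.sum_range_succ, Nat.factorial] at htaylor
  have hcube : |y| ^ 3 ≤ y ^ 2 * r := by
    rw [pow_succ, sq_abs]
    exact mul_le_mul_of_nonneg_left hy (sq_nonneg y)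
  have hquad : y ^ 2 / 2 + y ^ 2 * r * (2 / 9) ≤ y ^ 2 / (2 * (1 - r)) := by
    rw [le_div_iff₀ (by linarith)]
    nlinarith [mul_nonneg (sq_nonneg y) hr0, mul_nonneg (mul_nonneg (sq_nonneg y) hr0) hr0]
  linarith

namespace MeasureTheory

variable {Ω : Type*} {m0 : MeasurableSpace Ω} {μ : Measure Ω} {F : Filtration ℕ m0}
  {M : ℕ → Ω → ℝ} {R : ℝ}

/-- The predictable quadratic variation `⟨M⟩ n`; for a martingale the conditional second moments
of the increments are their conditional variances. -/
noncomputable def predictableQuadVar (μ : Measure Ω) (F : Filtration ℕ m0) (M : ℕ → Ω → ℝ)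
    (n : ℕ) (ω : Ω) : ℝ :=
  ∑ j ∈ range n, μ[fun ω' => (M (j + 1) ω' - M j ω') ^ 2 | F j] ω

lemma predictableQuadVar_succ (n : ℕ) :
    predictableQuadVar μ F M (n + 1) = fun ω =>
      predictableQuadVar μ F M n ω + μ[fun ω' => (M (n + 1) ω' - M n ω') ^ 2 | F n] ω := by
  ext ω
  exact sum_range_succ _ n

lemma predictableQuadVar_nonneg (n : ℕ) : 0 ≤ᵐ[μ] predictableQuadVar μ F M n := by
  have hQ : ∀ j, 0 ≤ᵐ[μ] μ[fun ω' => (M (j + 1) ω' - M j ω') ^ 2 | F j] := fun j =>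
    condExp_nonneg (ae_of_all _ fun ω => sq_nonneg _)
  filter_upwards [ae_all_iff.2 hQ] with ω hω
  exact sum_nonneg fun j _ => hω j

lemma stronglyMeasurable_predictableQuadVar {m n : ℕ} (hmn : m ≤ n + 1) :
    StronglyMeasurable[F n] (predictableQuadVar μ F M m) := by
  unfold predictableQuadVar
  refine Finset.stronglyMeasurable_fun_sum _ fun j hj => ?_
  exact stronglyMeasurable_condExp.mono (F.mono (by simp at hj; omega))

lemma abs_le_mul_of_abs_sub_succ_le (h0 : ∀ ω, M 0 ω = 0)
    (hinc : ∀ j, ∀ᵐ ω ∂μ, |M (j + 1) ω - M j ω| ≤ R) (n : ℕ) :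
    ∀ᵐ ω ∂μ, |M n ω| ≤ n * R := by
  induction n with
  | zero => simp [h0]
  | succ n ih =>
    filter_upwards [ih, hinc n] with ω hn hstep
    calc |M (n + 1) ω| = |M n ω + (M (n + 1) ω - M n ω)| := by ring_nf
      _ ≤ |M n ω| + |M (n + 1) ω - M n ω| := abs_add_le _ _
      _ ≤ (n + 1 : ℕ) * R := by push_cast; linarith

lemma integrable_exp_mul_of_abs_le [IsFiniteMeasure μ] {D : Ω → ℝ}
    (hD : AEStronglyMeasurable D μ) (hDR : ∀ᵐ ω ∂μ, |D ω| ≤ R) (l : ℝ) :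
    Integrable (fun ω => exp (l * D ω)) μ := by
  refine .of_bound (continuous_exp.comp_aestronglyMeasurable (hD.const_mul l)) (exp (|l| * R)) ?_
  filter_upwards [hDR] with ω hω
  rw [Real.norm_of_nonneg (exp_pos _).le, exp_le_exp]
  calc l * D ω ≤ |l| * |D ω| := (le_abs_self _).trans (abs_mul _ _).le
    _ ≤ |l| * R := mul_le_mul_of_nonneg_left hω (abs_nonneg l)

lemma condExp_exp_mul_le_exp_mul_condExp_sq [IsFiniteMeasure μ] {m : MeasurableSpace Ω}
    (hm : m ≤ m0) {D : Ω → ℝ} (hD_int : Integrable D μ) (hDR : ∀ᵐ ω ∂μ, |D ω| ≤ R)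
    (hD_mean : μ[D | m] =ᵐ[μ] 0) {l c : ℝ} (hl : 0 ≤ l) (hlR : l * R < 1)
    (hc : l ^ 2 / (2 * (1 - l * R)) ≤ c) :
    μ[fun ω => exp (l * D ω) | m] ≤ᵐ[μ] fun ω => exp (c * μ[fun ω => D ω ^ 2 | m] ω) := by
  have hD_sq_int : Integrable (fun ω => D ω ^ 2) μ := by
    refine .of_bound (hD_int.1.pow 2) (R ^ 2) ?_
    filter_upwards [hDR] with ω hω
    rw [norm_pow, Real.norm_eq_abs]
    exact pow_le_pow_left₀ (abs_nonneg _) hω 2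
  have hquad : (fun ω => exp (l * D ω)) ≤ᵐ[μ] (fun _ => 1) + l • D + c • fun ω => D ω ^ 2 := by
    filter_upwards [hDR] with ω hω
    have hlD : |l * D ω| ≤ l * R := by
      rw [abs_mul, abs_of_nonneg hl]
      exact mul_le_mul_of_nonneg_left hω hl
    have hc' : l ^ 2 * D ω ^ 2 / (2 * (1 - l * R)) ≤ c * D ω ^ 2 := by
      rw [mul_comm (l ^ 2), mul_div_assoc, mul_comm]
      exact mul_le_mul_of_nonneg_right hc (sq_nonneg _)
    have := exp_le_one_add_add_sq_div_of_abs_le hlR hlD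
    simp only [Pi.add_apply, Pi.smul_apply, smul_eq_mul]
    rw [mul_pow] at this
    linarith
  have hlin : μ[(fun _ => 1) + l • D + c • (fun ω => D ω ^ 2) | m] =ᵐ[μ]
      (fun _ => 1) + l • μ[D | m] + c • μ[fun ω => D ω ^ 2 | m] := by
    have hone : μ[fun _ => (1 : ℝ) | m] = fun _ => 1 := condExp_const hm 1
    filter_upwards [condExp_add ((integrable_const 1).add (hD_int.smul l)) (hD_sq_int.smul c) m,
      condExp_add (integrable_const 1) (hD_int.smul l) m, condExp_smul l D m,
      condExp_smul c (fun ω => D ω ^ 2) m] with ω h h' hlD hcD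
    simp only [Pi.add_apply] at h h' ⊢
    rw [h, h', hone, hlD, hcD]
  have hrhs_int := ((integrable_const 1).add (hD_int.smul l)).add (hD_sq_int.smul c)
  filter_upwards [condExp_mono (integrable_exp_mul_of_abs_le hD_int.1 hDR l) hrhs_int hquad,
    hlin, hD_mean] with ω hmono hω hmean
  rw [hω] at hmono
  simp only [Pi.add_apply, Pi.smul_apply, smul_eq_mul, hmean, Pi.zero_apply, mul_zero,
    add_zero] at hmono
  linarith [add_one_le_exp (c * μ[fun ω => D ω ^ 2 | m] ω)]

namespace Martingale

lemma condExp_sub_succ_ae_eq_zero (hM : Martingale M F μ) (n : ℕ) :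
    μ[fun ω => M (n + 1) ω - M n ω | F n] =ᵐ[μ] 0 := by
  filter_upwards [condExp_sub (hM.integrable (n + 1)) (hM.integrable n) (F n),
    hM.condExp_ae_eq n.le_succ, hM.condExp_ae_eq (le_refl n)] with ω h h_succ h_self
  rw [Pi.sub_def] at h
  rw [h, Pi.sub_apply, h_succ, h_self, sub_self, Pi.zero_apply]

variable {l c : ℝ}

lemma supermartingale_exp_mul_sub_predictableQuadVar [IsFiniteMeasure μ] (hM : Martingale M F μ)
    (h0 : ∀ ω, M 0 ω = 0) (hinc : ∀ j, ∀ᵐ ω ∂μ, |M (j + 1) ω - M j ω| ≤ R) (hl : 0 ≤ l)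
    (hlR : l * R < 1) (hc : l ^ 2 / (2 * (1 - l * R)) ≤ c) :
    Supermartingale (fun n ω => exp (l * M n ω - c * predictableQuadVar μ F M n ω)) F μ := by
  set X : ℕ → Ω → ℝ := fun n ω => exp (l * M n ω - c * predictableQuadVar μ F M n ω) with hX
  have hc0 : 0 ≤ c := (div_nonneg (sq_nonneg l) (by linarith)).trans hc
  have hX_meas : ∀ n, StronglyMeasurable[F n] (X n) := fun n =>
    continuous_exp.comp_stronglyMeasurable (((hM.stronglyMeasurable n).const_mul l).sub
      ((stronglyMeasurable_predictableQuadVar n.le_succ).const_mul c))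
  have hX_int : ∀ n, Integrable (X n) μ := fun n => by
    refine .of_bound ((hX_meas n).mono (F.le n)).aestronglyMeasurable (exp (l * (n * R))) ?_
    filter_upwards [abs_le_mul_of_abs_sub_succ_le h0 hinc n, predictableQuadVar_nonneg n]
      with ω hM_le hV
    rw [Real.norm_of_nonneg (exp_pos _).le, exp_le_exp]
    nlinarith [mul_le_mul_of_nonneg_left ((le_abs_self _).trans hM_le) hl, mul_nonneg hc0 hV]
  refine supermartingale_nat hX_meas hX_int fun n => ?_
  set A : Ω → ℝ := fun ω => exp (l * M n ω - c * predictableQuadVar μ F M (n + 1) ω)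
  set G : Ω → ℝ := fun ω => exp (l * (M (n + 1) ω - M n ω))
  have hAG : X (n + 1) = A * G := by
    ext ω
    simp only [hX, A, G, Pi.mul_apply, ← exp_add]
    ring_nf
  have hA_meas : StronglyMeasurable[F n] A :=
    continuous_exp.comp_stronglyMeasurable (((hM.stronglyMeasurable n).const_mul l).sub
      ((stronglyMeasurable_predictableQuadVar le_rfl).const_mul c))
  have hG_int : Integrable G μ := integrable_exp_mul_of_abs_le
    ((hM.integrable _).sub (hM.integrable _)).1 (hinc n) l
  filter_upwards [condExp_mul_of_stronglyMeasurable_left hA_meas (hAG ▸ hX_int (n + 1)) hG_int,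
    condExp_exp_mul_le_exp_mul_condExp_sq (F.le n) ((hM.integrable _).sub (hM.integrable _))
      (hinc n) (hM.condExp_sub_succ_ae_eq_zero n) hl hlR hc] with ω hpull hG
  rw [hAG, hpull, Pi.mul_apply]
  calc A ω * μ[G | F n] ω
      ≤ A ω * exp (c * μ[fun ω' => (M (n + 1) ω' - M n ω') ^ 2 | F n] ω) :=
        mul_le_mul_of_nonneg_left hG (exp_pos _).le
    _ = X n ω := by
      simp only [hX, A, predictableQuadVar_succ, ← exp_add]
      ring_nf

lemma integral_exp_mul_sub_predictableQuadVar_le_one [IsProbabilityMeasure μ]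
    (hM : Martingale M F μ) (h0 : ∀ ω, M 0 ω = 0)
    (hinc : ∀ j, ∀ᵐ ω ∂μ, |M (j + 1) ω - M j ω| ≤ R) (hl : 0 ≤ l) (hlR : l * R < 1)
    (hc : l ^ 2 / (2 * (1 - l * R)) ≤ c) (n : ℕ) :
    ∫ ω, exp (l * M n ω - c * predictableQuadVar μ F M n ω) ∂μ ≤ 1 := by
  have := (hM.supermartingale_exp_mul_sub_predictableQuadVar h0 hinc hl hlR hc).setIntegral_le
    (Nat.zero_le n) MeasurableSet.univ
  simpa [h0, predictableQuadVar] using this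

lemma measureReal_ge_le_exp_of_predictableQuadVar_le [IsProbabilityMeasure μ]
    (hM : Martingale M F μ) (h0 : ∀ ω, M 0 ω = 0)
    (hinc : ∀ j, ∀ᵐ ω ∂μ, |M (j + 1) ω - M j ω| ≤ R) (hl : 0 ≤ l) (hlR : l * R < 1)
    (hc : l ^ 2 / (2 * (1 - l * R)) ≤ c) {t : ℕ} {b : ℝ}
    (hqv : ∀ᵐ ω ∂μ, predictableQuadVar μ F M t ω ≤ b) (a : ℝ) :
    μ.real {ω | a ≤ M t ω} ≤ exp (-(l * a - c * b)) := by
  set X : Ω → ℝ := fun ω => exp (l * M t ω - c * predictableQuadVar μ F M t ω)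
  have hc0 : 0 ≤ c := (div_nonneg (sq_nonneg l) (by linarith)).trans hc
  have hsub : μ {ω | a ≤ M t ω} ≤ μ {ω | exp (l * a - c * b) ≤ X ω} := by
    refine measure_mono_ae ?_
    filter_upwards [hqv] with ω hω (hM_ge : a ≤ M t ω)
    show exp (l * a - c * b) ≤ X ω
    rw [exp_le_exp]
    nlinarith [mul_le_mul_of_nonneg_left hM_ge hl, mul_le_mul_of_nonneg_left hω hc0]
  have hmarkov := mul_meas_ge_le_integral_of_nonneg (ae_of_all μ fun ω => (exp_pos _).le)
    ((hM.supermartingale_exp_mul_sub_predictableQuadVar h0 hinc hl hlR hc).integrable t)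
    (exp (l * a - c * b))
  rw [exp_neg, ← one_div, le_div_iff₀ (exp_pos _), mul_comm]
  calc exp (l * a - c * b) * μ.real {ω | a ≤ M t ω}
      ≤ exp (l * a - c * b) * μ.real {ω | exp (l * a - c * b) ≤ X ω} :=
        mul_le_mul_of_nonneg_left (ENNReal.toReal_mono (measure_ne_top _ _) hsub) (exp_pos _).le
    _ ≤ 1 := hmarkov.trans (hM.integral_exp_mul_sub_predictableQuadVar_le_one h0 hinc hl hlR hc t)

end Martingale

end MeasureTheory

/-- Freedman's inequality: if `M` is a martingale with `M 0 = 0`, increments bounded by `R`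
a.s., and predictable quadratic variation `⟨M⟩(t) ≤ b` a.s., then for any `a > 0`,
`P(M(t) ≥ a) ≤ exp(−a²/(2(Ra + b)))`. -/
theorem stmt10 {Ω : Type*} {m0 : MeasurableSpace Ω} (μ : Measure Ω) [IsProbabilityMeasure μ]
    (F : Filtration ℕ m0) (M : ℕ → Ω → ℝ) (hM : Martingale M F μ)
    (h0 : ∀ ω, M 0 ω = 0) (R : ℝ) (hR : 0 < R)
    (hbdd : ∀ j : ℕ, ∀ᵐ ω ∂μ, |M (j + 1) ω - M j ω| ≤ R)
    (t : ℕ) (b : ℝ) (hb : 0 < b)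
    (hqv : ∀ᵐ ω ∂μ, ∑ j ∈ Finset.range t,
        (μ[fun ω' => (M (j + 1) ω' - M j ω') ^ 2 | F j]) ω ≤ b)
    (a : ℝ) (ha : 0 < a) :
    (μ {ω | a ≤ M t ω}).toReal ≤ Real.exp (-a ^ 2 / (2 * (R * a + b))) := by
  have hK : 0 < R * a + b := by positivity
  obtain ⟨l, hl_def⟩ : ∃ l, l = a / (R * a + b) := ⟨_, rfl⟩
  have hl : 0 ≤ l := hl_def ▸ by positivity
  have h1lR : 1 - l * R = b / (R * a + b) := by
    rw [hl_def]
    field_simp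
    ring
  have hlR : l * R < 1 := by
    have : 0 < b / (R * a + b) := by positivity
    linarith
  have hexponent : -(l * a - l ^ 2 / (2 * (1 - l * R)) * b) = -a ^ 2 / (2 * (R * a + b)) := by
    rw [h1lR, hl_def]
    field_simp
    ring
  rw [← hexponent]
  exact hM.measureReal_ge_le_exp_of_predictableQuadVar_le h0 hbdd hl hlR le_rfl hqv a
end
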